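/- arXiv:0811.4191 — 4 statements merged into one kernel-verified Lean document; each statement's English description precedes it below -/
import Mathlib

section
/- Let L ≥ 1 be a fixed integer and ε ∈ (0,1). Then lim_{SNR→∞} [ C_ε^L(SNR) − log₂(SNR) ] = F_ε^{-1}( (1/L)·Σ_{i=1}^L log₂(H_i) ), i.e., the ε-outage capacity admits the high-SNR affine expansion C_ε^L(SNR) = log₂(SNR) + F_ε^{-1}((1/L)Σ_{i=1}^L log₂ H_i) + o(1). -/
/-!
Write `Zₛ = (1/L) Σ log₂(1 + s Hᵢ) - log₂ s`, so that `C_ε^L(s) - log₂ s` is an `ε`-quantile of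
`Zₛ`. Since the `Hᵢ` are a.s. positive, `Zₛ = (1/L) Σ log₂(s⁻¹ + Hᵢ)` converges a.s. to
`Y = (1/L) Σ log₂ Hᵢ`. A.s. convergence bounds `P[Zₛ ∈ U]` from below asymptotically by
`P[Y ∈ U]` for open `U`, and the law of `Y` charges every interval (the `Hᵢ` are independent and
exponential), so the `ε`-quantile of `Y` is isolated on both sides and the quantiles of `Zₛ`
converge to it.
-/

open MeasureTheory ProbabilityTheory Real Filter Topology Set

@[fun_prop]
lemma Real.measurable_logb (b : ℝ) : Measurable (logb b) := measurable_log.div_const _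

section Quantile

variable {Ω ι E : Type*} [MeasurableSpace Ω] {μ : Measure Ω}

lemma measure_preimage_Iic_lt_of_pos_Ioc [IsFiniteMeasure μ] {Y : Ω → ℝ} (hY : Measurable Y)
    {a b : ℝ} (hab : a ≤ b) (h : 0 < μ (Y ⁻¹' Ioc a b)) :
    μ (Y ⁻¹' Iic a) < μ (Y ⁻¹' Iic b) := by
  have hdisj : Disjoint (Y ⁻¹' Iic a) (Y ⁻¹' Ioc a b) :=
    (Iic_disjoint_Ioc le_rfl).preimage Y
  calc μ (Y ⁻¹' Iic a) < μ (Y ⁻¹' Iic a) + μ (Y ⁻¹' Ioc a b) :=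
        ENNReal.lt_add_right (measure_ne_top _ _) h.ne'
    _ = μ (Y ⁻¹' Iic b) := by
        rw [← measure_union hdisj (hY measurableSet_Ioc), ← preimage_union,
          Iic_union_Ioc_eq_Iic hab]

lemma measure_preimage_Ioi_lt_of_pos_Ioc [IsFiniteMeasure μ] {Y : Ω → ℝ} (hY : Measurable Y)
    {a b : ℝ} (hab : a ≤ b) (h : 0 < μ (Y ⁻¹' Ioc a b)) :
    μ (Y ⁻¹' Ioi b) < μ (Y ⁻¹' Ioi a) := by
  have hdisj : Disjoint (Y ⁻¹' Ioc a b) (Y ⁻¹' Ioi b) :=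
    (Ioc_disjoint_Ioi le_rfl).preimage Y
  calc μ (Y ⁻¹' Ioi b) < μ (Y ⁻¹' Ioi b) + μ (Y ⁻¹' Ioc a b) :=
        ENNReal.lt_add_right (measure_ne_top _ _) h.ne'
    _ = μ (Y ⁻¹' Ioi a) := by
        rw [add_comm, ← measure_union hdisj (hY measurableSet_Ioi), ← preimage_union,
          Ioc_union_Ioi_eq_Ioi hab]

/-- The easy half of the portmanteau theorem, for almost sure convergence. -/
lemma eventually_lt_measure_preimage_of_tendsto_ae [SemilatticeSup ι] [Nonempty ι]
    [IsCountablyGenerated (atTop : Filter ι)] [TopologicalSpace E] {Z : ι → Ω → E} {Y : Ω → E}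
    (hlim : ∀ᵐ ω ∂μ, Tendsto (fun s => Z s ω) atTop (𝓝 (Y ω)))
    {U : Set E} (hU : IsOpen U) {r : ENNReal} (hr : r < μ (Y ⁻¹' U)) :
    ∀ᶠ s in atTop, r < μ (Z s ⁻¹' U) := by
  set A : ι → Set Ω := fun s => {ω | ∀ t, s ≤ t → Z t ω ∈ U}
  have hA : Monotone A := fun s s' hss' ω hω t ht => hω t (hss'.trans ht)
  have hYA : Y ⁻¹' U ≤ᵐ[μ] ⋃ s, A s := by
    filter_upwards [hlim] with ω hω hωU
    exact mem_iUnion.2 (eventually_atTop.1 (hω (hU.mem_nhds hωU)))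
  filter_upwards [(tendsto_measure_iUnion_atTop hA).eventually_const_lt
    (hr.trans_le (measure_mono_ae hYA))] with s hs
  exact hs.trans_le (measure_mono fun ω hω => hω s le_rfl)

theorem tendsto_quantile_of_tendsto_ae [IsProbabilityMeasure μ] [SemilatticeSup ι] [Nonempty ι]
    [IsCountablyGenerated (atTop : Filter ι)] {Z : ι → Ω → ℝ} {Y : Ω → ℝ}
    (hZ : ∀ s, Measurable (Z s)) (hY : Measurable Y)
    (hlim : ∀ᵐ ω ∂μ, Tendsto (fun s => Z s ω) atTop (𝓝 (Y ω)))
    (hcharge : ∀ a b, a < b → 0 < μ (Y ⁻¹' Ioc a b))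
    {c : ι → ℝ} {y : ℝ} (hc : ∀ᶠ s in atTop, μ (Z s ⁻¹' Iic (c s)) = μ (Y ⁻¹' Iic y)) :
    Tendsto c atTop (𝓝 y) := by
  refine tendsto_order.2 ⟨fun a ha => ?_, fun b hb => ?_⟩
  · have hlt := measure_preimage_Ioi_lt_of_pos_Ioc hY ha.le (hcharge a y ha)
    filter_upwards [eventually_lt_measure_preimage_of_tendsto_ae hlim isOpen_Ioi hlt, hc]
      with s hs hcs
    by_contra! hle
    have hcompl : μ (Z s ⁻¹' Ioi (c s)) = μ (Y ⁻¹' Ioi y) := by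
      rw [← compl_Iic, ← compl_Iic, preimage_compl, preimage_compl,
        prob_compl_eq_one_sub (hZ s measurableSet_Iic), prob_compl_eq_one_sub (hY measurableSet_Iic),
        hcs]
    exact (hs.trans_le (measure_mono (preimage_mono (Ioi_subset_Ioi hle)))).ne hcompl.symm
  · obtain ⟨m, hym, hmb⟩ := exists_between hb
    have hlt : μ (Y ⁻¹' Iic y) < μ (Y ⁻¹' Iio b) :=
      (measure_preimage_Iic_lt_of_pos_Ioc hY hym.le (hcharge y m hym)).trans_le
        (measure_mono (preimage_mono (Iic_subset_Iio.2 hmb)))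
    filter_upwards [eventually_lt_measure_preimage_of_tendsto_ae hlim isOpen_Iio hlt, hc]
      with s hs hcs
    by_contra! hle
    exact (hs.trans_le (measure_mono (preimage_mono (Iio_subset_Iic hle)))).ne' hcs

end Quantile

section Exponential

variable {r : ℝ}

lemma expMeasure_Iic_zero (hr : 0 < r) : expMeasure r (Iic 0) = 0 := by
  have := isProbabilityMeasure_expMeasure hr
  rw [← ofReal_cdf, cdf_expMeasure_eq hr, if_pos le_rfl, mul_zero, neg_zero, exp_zero, sub_self,
    ENNReal.ofReal_zero]

lemma expMeasure_Ioc_pos (hr : 0 < r) {c d : ℝ} (hc : 0 ≤ c) (hcd : c < d) :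
    0 < expMeasure r (Ioc c d) := by
  have := isProbabilityMeasure_expMeasure hr
  rw [← measure_cdf (μ := expMeasure r), StieltjesFunction.measure_Ioc, cdf_expMeasure_eq hr,
    cdf_expMeasure_eq hr, if_pos (hc.trans hcd.le), if_pos hc, ENNReal.ofReal_pos]
  have := exp_lt_exp.2 (show -(r * d) < -(r * c) by nlinarith)
  linarith

variable {Ω : Type*} [MeasurableSpace Ω] {μ : Measure Ω}

lemma ae_pos_of_map_eq_expMeasure (hr : 0 < r) {X : Ω → ℝ} (hX : Measurable X)
    (h : μ.map X = expMeasure r) : ∀ᵐ ω ∂μ, 0 < X ω := by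
  have hnull : μ (X ⁻¹' Iic 0) = 0 := by
    rw [← Measure.map_apply hX measurableSet_Iic, h, expMeasure_Iic_zero hr]
  filter_upwards [measure_eq_zero_iff_ae_notMem.1 hnull] with ω hω using not_le.1 hω

end Exponential

lemma Convex.one_div_mul_sum_range_mem {s : Set ℝ} (hs : Convex ℝ s) {n : ℕ} (hn : n ≠ 0)
    {z : ℕ → ℝ} (hz : ∀ i ∈ Finset.range n, z i ∈ s) :
    (1 / (n : ℝ)) * ∑ i ∈ Finset.range n, z i ∈ s := by
  rw [Finset.mul_sum]
  refine hs.sum_mem (fun _ _ => by positivity) ?_ hz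
  rw [Finset.sum_const, Finset.card_range, nsmul_eq_mul]
  field_simp

lemma measure_average_logb_mem_Ioc_pos {b r : ℝ} (hb : 1 < b) (hr : 0 < r)
    {Ω : Type*} [MeasurableSpace Ω] {μ : Measure Ω} {H : ℕ → Ω → ℝ}
    (hmeas : ∀ i, Measurable (H i)) (hindep : iIndepFun H μ)
    (hdist : ∀ i, μ.map (H i) = expMeasure r) {L : ℕ} (hL : L ≠ 0) {u v : ℝ} (huv : u < v) :
    0 < μ ((fun ω => (1 / (L : ℝ)) * ∑ i ∈ Finset.range L, logb b (H i ω)) ⁻¹' Ioc u v) := by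
  have hbu : 0 < b ^ u := rpow_pos_of_pos (by linarith) u
  have hsub : (⋂ i ∈ Finset.range L, H i ⁻¹' Ioc (b ^ u) (b ^ v)) ⊆
      (fun ω => (1 / (L : ℝ)) * ∑ i ∈ Finset.range L, logb b (H i ω)) ⁻¹' Ioc u v := by
    intro ω hω
    simp only [mem_iInter, mem_preimage, mem_Ioc] at hω
    refine (convex_Ioc u v).one_div_mul_sum_range_mem hL fun i hi => ?_
    obtain ⟨hlo, hhi⟩ := hω i hi
    exact ⟨(lt_logb_iff_rpow_lt hb (hbu.trans hlo)).2 hlo,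
      (logb_le_iff_le_rpow hb (hbu.trans hlo)).2 hhi⟩
  have hfactor : ∀ i, 0 < μ (H i ⁻¹' Ioc (b ^ u) (b ^ v)) := fun i => by
    rw [← Measure.map_apply (hmeas i) measurableSet_Ioc, hdist i]
    exact expMeasure_Ioc_pos hr hbu.le (rpow_lt_rpow_of_exponent_lt hb huv)
  refine lt_of_lt_of_le ?_ (measure_mono hsub)
  rw [hindep.meas_biInter fun i _ => ⟨_, measurableSet_Ioc, rfl⟩]
  exact CanonicallyOrderedAdd.prod_pos.2 fun i _ => hfactor i

lemma tendsto_logb_one_add_mul_sub_logb {b h : ℝ} (hh : 0 < h) :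
    Tendsto (fun s => logb b (1 + s * h) - logb b s) atTop (𝓝 (logb b h)) := by
  have hinv : Tendsto (fun s : ℝ => s⁻¹ + h) atTop (𝓝 h) := by
    simpa using tendsto_inv_atTop_zero.add_const h
  refine ((continuousAt_logb hh.ne').tendsto.comp hinv).congr' ?_
  filter_upwards [eventually_gt_atTop 0] with s hs
  rw [Function.comp_apply, ← logb_div (by positivity) hs.ne', add_div, one_div,
    mul_div_cancel_left₀ _ hs.ne']

lemma tendsto_average_logb_one_add_mul_sub_logb {b : ℝ} {L : ℕ} (hL : L ≠ 0) {h : ℕ → ℝ}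
    (hh : ∀ i ∈ Finset.range L, 0 < h i) :
    Tendsto (fun s => (1 / (L : ℝ)) * ∑ i ∈ Finset.range L, logb b (1 + s * h i) - logb b s) atTop
      (𝓝 ((1 / (L : ℝ)) * ∑ i ∈ Finset.range L, logb b (h i))) := by
  have hsplit : ∀ s, (1 / (L : ℝ)) * ∑ i ∈ Finset.range L, logb b (1 + s * h i) - logb b s =
      (1 / (L : ℝ)) * ∑ i ∈ Finset.range L, (logb b (1 + s * h i) - logb b s) := fun s => by
    rw [Finset.sum_sub_distrib, Finset.sum_const, Finset.card_range, nsmul_eq_mul]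
    field_simp
  simp only [hsplit]
  exact (tendsto_finsetSum _ fun i hi => tendsto_logb_one_add_mul_sub_logb (hh i hi)).const_mul _

theorem outage_capacity_high_snr_affine_general
    {Ω : Type*} [MeasurableSpace Ω] (μ : Measure Ω) [IsProbabilityMeasure μ]
    (H : ℕ → Ω → ℝ) (hmeas : ∀ i, Measurable (H i))
    (hindep : iIndepFun H μ)
    (hdist : ∀ i, Measure.map (H i) μ = expMeasure 1)
    (L : ℕ) (hL : 1 ≤ L) (ε : ℝ)
    (C : ℝ → ℝ)
    (hC : ∀ snr > (0:ℝ), 0 < C snr ∧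
      (μ {ω | (1 / (L:ℝ)) * ∑ i ∈ Finset.range L,
          Real.logb 2 (1 + snr * H i ω) ≤ C snr}).toReal = ε)
    (y : ℝ)
    (hy : (μ {ω | (1 / (L:ℝ)) * ∑ i ∈ Finset.range L,
          Real.logb 2 (H i ω) ≤ y}).toReal = ε) :
    Tendsto (fun snr => C snr - Real.logb 2 snr) atTop (𝓝 y) := by
  have hL0 : L ≠ 0 := by omega
  have hpos : ∀ᵐ ω ∂μ, ∀ i, 0 < H i ω :=
    ae_all_iff.2 fun i => ae_pos_of_map_eq_expMeasure one_pos (hmeas i) (hdist i)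
  refine tendsto_quantile_of_tendsto_ae
    (Z := fun s ω => (1 / (L : ℝ)) * ∑ i ∈ Finset.range L, logb 2 (1 + s * H i ω) - logb 2 s)
    (by fun_prop) (by fun_prop) ?_
    (fun _ _ => measure_average_logb_mem_Ioc_pos one_lt_two one_pos hmeas hindep hdist hL0) ?_
  · filter_upwards [hpos] with ω hω
    exact tendsto_average_logb_one_add_mul_sub_logb hL0 fun i _ => hω i
  · filter_upwards [eventually_gt_atTop 0] with s hs
    rw [← ENNReal.toReal_eq_toReal_iff' (measure_ne_top _ _) (measure_ne_top _ _)]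
    simp only [preimage, mem_Iic, sub_le_sub_iff_right]
    rw [(hC s hs).2, hy]

/-- High-SNR affine expansion of the ε-outage capacity:
`C_ε^L(SNR) = log₂ SNR + F_ε⁻¹((1/L)·Σ log₂ Hᵢ) + o(1)` as `SNR → ∞`. -/
theorem outage_capacity_high_snr_affine
    {Ω : Type*} [MeasurableSpace Ω] (μ : Measure Ω) [IsProbabilityMeasure μ]
    (H : ℕ → Ω → ℝ) (hmeas : ∀ i, Measurable (H i))
    (hindep : iIndepFun H μ)
    (hdist : ∀ i, Measure.map (H i) μ = expMeasure 1)
    (L : ℕ) (hL : 1 ≤ L) (ε : ℝ) (hε : ε ∈ Set.Ioo (0:ℝ) 1)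
    (C : ℝ → ℝ)
    (hC : ∀ snr > (0:ℝ), 0 < C snr ∧
      (μ {ω | (1 / (L:ℝ)) * ∑ i ∈ Finset.range L,
          Real.logb 2 (1 + snr * H i ω) ≤ C snr}).toReal = ε)
    (y : ℝ)
    (hy : (μ {ω | (1 / (L:ℝ)) * ∑ i ∈ Finset.range L,
          Real.logb 2 (H i ω) ≤ y}).toReal = ε) :
    Tendsto (fun snr => C snr - Real.logb 2 snr) atTop (𝓝 y) :=
  outage_capacity_high_snr_affine_general μ H hmeas hindep hdist L hL ε C hC y hy
end

section
/- For any fixed SNR > 0 and any ε ∈ (0,1), the ε-outage capacity converges to the ergodic capacity as the diversity order grows: lim_{L→∞} C_ε^L(SNR) = μ(SNR). -/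
/-!
By the strong law of large numbers, the empirical means of the i.i.d. integrable variables
`log₂ (1 + SNR · Hᵢ)` converge in probability to `μ(SNR)`; integrability comes from
`log (1 + a x) ≤ a x` and the finite mean of the exponential law. A level-`ε` quantile of a
sequence converging in probability to a constant converges to that constant: were `C L` at least
`δ` below the limit, `{mean ≤ C L}` would lie in the deviation event `{|mean - μ| ≥ δ}`, of
probability eventually `< ε`; were it `δ` above, `{mean ≤ C L}` together with that deviation event
would cover `Ω`, forcing `ε` to be eventually close to `1`.
-/

open MeasureTheory ProbabilityTheory Real Filter Topology Set

lemma expMeasure_eq_withDensity (r : ℝ) :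
    expMeasure r = volume.withDensity (exponentialPDF r) := rfl

lemma measurable_exponentialPDF (r : ℝ) : Measurable (exponentialPDF r) :=
  (measurable_exponentialPDFReal r).ennreal_ofReal

lemma ae_nonneg_expMeasure (r : ℝ) : ∀ᵐ x ∂expMeasure r, 0 ≤ x := by
  simp only [ae_iff, not_le, expMeasure_eq_withDensity]
  change volume.withDensity _ (Iio 0) = 0
  rw [withDensity_apply _ measurableSet_Iio]
  exact lintegral_exponentialPDF_of_nonpos le_rfl

lemma integrable_id_expMeasure {r : ℝ} (hr : 0 < r) : Integrable id (expMeasure r) := by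
  rw [expMeasure_eq_withDensity, integrable_withDensity_iff (measurable_exponentialPDF r)
    (.of_forall fun _ => ENNReal.ofReal_lt_top), ← integrableOn_univ, ← Iio_union_Ici (a := 0),
    integrableOn_union]
  constructor
  · refine integrableOn_zero.congr_fun (fun x hx => ?_) measurableSet_Iio
    simp [exponentialPDF_of_neg (mem_Iio.mp hx)]
  · have hIoi : IntegrableOn (fun x : ℝ => r * (x ^ (1:ℝ) * exp (-r * x ^ (1:ℝ)))) (Ioi 0) :=
      (integrableOn_rpow_mul_exp_neg_mul_rpow (by norm_num) one_pos hr).const_mul r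
    refine (Iff.mpr integrableOn_Ici_iff_integrableOn_Ioi hIoi).congr_fun (fun x hx => ?_)
      measurableSet_Ici
    rw [exponentialPDF_of_nonneg hx, ENNReal.toReal_ofReal (by positivity)]
    simp only [rpow_one, id, neg_mul]
    ring

lemma integrable_log_one_add_mul_expMeasure {r a : ℝ} (hr : 0 < r) (ha : 0 ≤ a) :
    Integrable (fun x => log (1 + a * x)) (expMeasure r) := by
  refine ((integrable_id_expMeasure hr).const_mul a).mono'
    (Measurable.log (by fun_prop)).aestronglyMeasurable ?_
  filter_upwards [ae_nonneg_expMeasure r] with x hx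
  have h1 : 1 ≤ 1 + a * x := le_add_of_nonneg_right (mul_nonneg ha hx)
  rw [norm_of_nonneg (log_nonneg h1), id]
  linarith [log_le_sub_one_of_pos (zero_lt_one.trans_le h1)]

theorem MeasureTheory.TendstoInMeasure.tendsto_of_measureReal_le_eq {ι Ω : Type*} {l : Filter ι}
    [MeasurableSpace Ω] {μ : Measure Ω} [IsProbabilityMeasure μ] {S : ι → Ω → ℝ} {m : ℝ}
    (hS : TendstoInMeasure μ S l fun _ => m) {c : ι → ℝ} {ε : ℝ} (hε : ε ∈ Ioo 0 1)
    (hc : ∀ᶠ i in l, μ.real {ω | S i ω ≤ c i} = ε) :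
    Tendsto c l (𝓝 m) := by
  have hdev := tendstoInMeasure_iff_measureReal_dist.1 hS
  refine tendsto_order.2 ⟨fun a ha => ?_, fun b hb => ?_⟩
  · filter_upwards [(hdev (m - a) (sub_pos.2 ha)).eventually (gt_mem_nhds hε.1), hc]
      with i hsmall hci
    by_contra! hca
    have hsub : {ω | S i ω ≤ c i} ⊆ {ω | m - a ≤ dist (S i ω) m} :=
      fun ω (hω : S i ω ≤ c i) => by
        rw [mem_ofPred_eq, Real.dist_eq]
        linarith [neg_abs_le (S i ω - m)]
    linarith [measureReal_mono hsub (μ := μ)]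
  · filter_upwards [(hdev (b - m) (sub_pos.2 hb)).eventually (gt_mem_nhds (sub_pos.2 hε.2)), hc]
      with i hsmall hci
    by_contra! hbc
    have hcover : univ ⊆ {ω | b - m ≤ dist (S i ω) m} ∪ {ω | S i ω ≤ c i} := fun ω _ => by
      by_contra! hω
      simp only [mem_union, mem_ofPred_eq, not_or, not_le, Real.dist_eq] at hω
      linarith [le_abs_self (S i ω - m)]
    linarith [measureReal_mono hcover (μ := μ), measureReal_union_le (μ := μ)
      {ω | b - m ≤ dist (S i ω) m} {ω | S i ω ≤ c i}, probReal_univ (μ := μ)]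

theorem tendstoInMeasure_average_comp {Ω β : Type*} [MeasurableSpace Ω] [MeasurableSpace β]
    {μ : Measure Ω} [IsFiniteMeasure μ] {H : ℕ → Ω → β} (hindep : iIndepFun H μ)
    (hident : ∀ i, IdentDistrib (H i) (H 0) μ μ) {g : β → ℝ} (hg : Measurable g)
    (hint : Integrable (g ∘ H 0) μ) :
    TendstoInMeasure μ (fun n ω => (∑ i ∈ Finset.range n, g (H i ω)) / n) atTop
      fun _ => μ[g ∘ H 0] := by
  refine tendstoInMeasure_of_tendsto_ae (fun n => ?_) ?_
  · exact (Finset.aemeasurable_fun_sum _ fun i _ =>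
      hg.comp_aemeasurable (hident i).aemeasurable_fst).div_const _ |>.aestronglyMeasurable
  · exact strong_law_ae_real (fun i => g ∘ H i) hint
      (fun i j hij => (hindep.indepFun hij).comp hg hg) fun i => (hident i).comp hg

theorem outage_capacity_tendsto_ergodic_general
    {Ω : Type*} [MeasurableSpace Ω] (μ : Measure Ω) [IsProbabilityMeasure μ]
    (H : ℕ → Ω → ℝ)
    (hindep : iIndepFun H μ)
    (hdist : ∀ i, Measure.map (H i) μ = expMeasure 1)
    (snr : ℝ) (hsnr : 0 < snr) (ε : ℝ) (hε : ε ∈ Set.Ioo (0:ℝ) 1)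
    (C : ℕ → ℝ)
    (hC : ∀ L, 1 ≤ L → 0 < C L ∧
      (μ {ω | (1 / (L:ℝ)) * ∑ i ∈ Finset.range L,
          Real.logb 2 (1 + snr * H i ω) ≤ C L}).toReal = ε) :
    Tendsto (fun L => C L) atTop (𝓝 (∫ ω, Real.logb 2 (1 + snr * H 0 ω) ∂μ)) := by
  have hH : ∀ i, AEMeasurable (H i) μ := fun i => .of_map_ne_zero <| by
    rw [hdist]; exact (isProbabilityMeasure_expMeasure one_pos).ne_zero
  have hident : ∀ i, IdentDistrib (H i) (H 0) μ μ := fun i => ⟨hH i, hH 0, by rw [hdist, hdist]⟩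
  have hg : Measurable fun x => logb 2 (1 + snr * x) :=
    (Measurable.log (by fun_prop)).div_const _
  have hint : Integrable (fun ω => logb 2 (1 + snr * H 0 ω)) μ := by
    refine (integrable_map_measure hg.aestronglyMeasurable (hH 0)).1 ?_
    rw [hdist]
    exact (integrable_log_one_add_mul_expMeasure one_pos hsnr.le).div_const _
  refine (tendstoInMeasure_average_comp hindep hident hg hint).tendsto_of_measureReal_le_eq hε
    (eventually_atTop.2 ⟨1, fun L hL => ?_⟩)
  rw [← (hC L hL).2]
  simp only [one_div, inv_mul_eq_div, measureReal_def]

/-- For fixed `SNR > 0` and `ε ∈ (0,1)`, the ε-outage capacity converges to the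
ergodic capacity `μ(SNR) = E[log₂(1 + SNR·H₁)]` as the diversity order `L → ∞`. -/
theorem outage_capacity_tendsto_ergodic
    {Ω : Type*} [MeasurableSpace Ω] (μ : Measure Ω) [IsProbabilityMeasure μ]
    (H : ℕ → Ω → ℝ) (hmeas : ∀ i, Measurable (H i))
    (hindep : iIndepFun H μ)
    (hdist : ∀ i, Measure.map (H i) μ = expMeasure 1)
    (snr : ℝ) (hsnr : 0 < snr) (ε : ℝ) (hε : ε ∈ Set.Ioo (0:ℝ) 1)
    (C : ℕ → ℝ)
    (hC : ∀ L, 1 ≤ L → 0 < C L ∧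
      (μ {ω | (1 / (L:ℝ)) * ∑ i ∈ Finset.range L,
          Real.logb 2 (1 + snr * H i ω) ≤ C L}).toReal = ε) :
    Tendsto (fun L => C L) atTop (𝓝 (∫ ω, Real.logb 2 (1 + snr * H 0 ω) ∂μ)) :=
  outage_capacity_tendsto_ergodic_general μ H hindep hdist snr hsnr ε hε C hC
end

section
/- (Lemma, Appendix D, case k < r) Let r > 0 and let R : (0,∞) → (0,∞) satisfy lim_{SNR→∞} R(SNR)/log₂(SNR) = r. Then for every positive integer k with k < r, lim_{SNR→∞} P[ Σ_{i=1}^{k} log₂(1 + SNR·H_i) ≤ R(SNR) ] = 1. -/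
/-!
For `snr ≥ 1` and `h ≥ 0` we have `1 + snr·h ≤ snr·(1 + h)`, so
`Σᵢ log₂(1 + snr·Hᵢ) ≤ k·log₂ snr + Y` with `Y = Σᵢ log₂(1 + Hᵢ)` a fixed random variable.
Since `R(snr) / log₂ snr → r > k`, the gap `R(snr) - k·log₂ snr` tends to `+∞`, hence the
probability that `Y` exceeds it tends to `0`.
-/

open MeasureTheory ProbabilityTheory Real Filter Topology Finset

lemma logb_one_add_mul_le {b t x : ℝ} (hb : 1 < b) (ht : 1 ≤ t) (hx : 0 ≤ x) :
    logb b (1 + t * x) ≤ logb b t + logb b (1 + x) := by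
  rw [← logb_mul (by positivity) (by positivity)]
  exact logb_le_logb_of_le hb (by positivity) (by nlinarith)

lemma sum_logb_one_add_mul_le {ι : Type*} (s : Finset ι) {b t : ℝ} {x : ι → ℝ} (hb : 1 < b)
    (ht : 1 ≤ t) (hx : ∀ i ∈ s, 0 ≤ x i) :
    ∑ i ∈ s, logb b (1 + t * x i) ≤ #s * logb b t + ∑ i ∈ s, logb b (1 + x i) :=
  calc ∑ i ∈ s, logb b (1 + t * x i) ≤ ∑ i ∈ s, (logb b t + logb b (1 + x i)) :=
        sum_le_sum fun i hi => logb_one_add_mul_le hb ht (hx i hi)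
    _ = #s * logb b t + ∑ i ∈ s, logb b (1 + x i) := by
        rw [sum_add_distrib, sum_const, nsmul_eq_mul]

lemma tendsto_sub_mul_atTop_of_tendsto_div {α : Type*} {l : Filter α} {f g : α → ℝ}
    {r k : ℝ} (hg : Tendsto g l atTop) (hfg : Tendsto (fun x => f x / g x) l (𝓝 r))
    (hkr : k < r) : Tendsto (fun x => f x - k * g x) l atTop := by
  refine (hg.atTop_mul_pos (sub_pos.2 hkr) (hfg.sub_const k)).congr' ?_
  filter_upwards [hg.eventually_gt_atTop 0] with x hx
  field_simp

lemma gammaMeasure_Iio_zero (a r : ℝ) : gammaMeasure a r (Set.Iio 0) = 0 := by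
  rw [gammaMeasure, withDensity_apply _ measurableSet_Iio]
  exact lintegral_gammaPDF_of_nonpos le_rfl

lemma ae_nonneg_of_map_eq_expMeasure {Ω : Type*} [MeasurableSpace Ω] {μ : Measure Ω}
    {X : Ω → ℝ} {r : ℝ} (hX : AEMeasurable X μ) (hlaw : μ.map X = expMeasure r) :
    ∀ᵐ ω ∂μ, 0 ≤ X ω := by
  refine ae_of_ae_map hX ?_
  rw [hlaw, expMeasure, ae_iff]
  simp only [not_le]
  exact gammaMeasure_Iio_zero 1 r

lemma tendsto_measure_lt_atTop {Ω : Type*} [MeasurableSpace Ω] {μ : Measure Ω}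
    [IsFiniteMeasure μ] {X : Ω → ℝ} (hX : AEMeasurable X μ) :
    Tendsto (fun t : ℝ => μ {ω | t < X ω}) atTop (𝓝 0) := by
  have hlim := tendsto_measure_iInter_atTop (μ := μ) (s := fun t : ℝ => {ω | t < X ω})
    (fun _ => nullMeasurableSet_lt aemeasurable_const hX)
    (fun _ _ hst _ hω => lt_of_le_of_lt hst hω) ⟨0, measure_ne_top _ _⟩
  have hempty : ⋂ t : ℝ, {ω | t < X ω} = ∅ :=
    Set.eq_empty_of_forall_notMem fun ω hω => lt_irrefl (X ω) (Set.mem_iInter.1 hω (X ω))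
  rwa [hempty, measure_empty] at hlim

lemma tendsto_measure_toReal_one_of_tendsto_measure_compl {Ω α : Type*} [MeasurableSpace Ω]
    {μ : Measure Ω} [IsProbabilityMeasure μ] {l : Filter α} {s : α → Set Ω}
    (h : Tendsto (fun a => μ (s a)ᶜ) l (𝓝 0)) :
    Tendsto (fun a => (μ (s a)).toReal) l (𝓝 1) := by
  -- `1 ≤ μ s + μ sᶜ` holds by subadditivity, so no measurability of `s a` is needed.
  have hlower : ∀ a, 1 - μ (s a)ᶜ ≤ μ (s a) := fun a => by
    rw [tsub_le_iff_right, ← measure_univ (μ := μ), ← Set.union_compl_self (s a)]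
    exact measure_union_le _ _
  have hone : Tendsto (fun a => 1 - μ (s a)ᶜ) l (𝓝 1) := by
    simpa using ENNReal.Tendsto.sub tendsto_const_nhds h (Or.inl ENNReal.one_ne_top)
  have hlim : Tendsto (fun a => μ (s a)) l (𝓝 1) :=
    tendsto_of_tendsto_of_tendsto_of_le_of_le hone tendsto_const_nhds hlower
      fun _ => prob_le_one
  exact (ENNReal.tendsto_toReal ENNReal.one_ne_top).comp hlim

theorem outage_prob_tendsto_one_of_k_lt_prelog_general
    {Ω : Type*} [MeasurableSpace Ω] (μ : Measure Ω) [IsProbabilityMeasure μ]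
    (H : ℕ → Ω → ℝ) (hmeas : ∀ i, Measurable (H i))
    (hdist : ∀ i, Measure.map (H i) μ = expMeasure 1)
    (r : ℝ) (R : ℝ → ℝ)
    (hprelog : Tendsto (fun snr => R snr / Real.logb 2 snr) atTop (𝓝 r))
    (k : ℕ) (hkr : (k : ℝ) < r) :
    Tendsto
      (fun snr : ℝ =>
        (μ {ω | ∑ i ∈ Finset.range k, Real.logb 2 (1 + snr * H i ω) ≤ R snr}).toReal)
      atTop (𝓝 1) := by
  have hH : ∀ᵐ ω ∂μ, ∀ i, 0 ≤ H i ω :=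
    ae_all_iff.2 fun i => ae_nonneg_of_map_eq_expMeasure (hmeas i).aemeasurable (hdist i)
  set Y : Ω → ℝ := fun ω => ∑ i ∈ range k, logb 2 (1 + H i ω)
  -- `logb 2 x` unfolds to `log x / log 2`.
  have hY : AEMeasurable Y μ := (measurable_sum _ fun i _ =>
    (measurable_const.add (hmeas i)).log.div_const (log 2)).aemeasurable
  have hgap : Tendsto (fun snr => R snr - k * logb 2 snr) atTop atTop :=
    tendsto_sub_mul_atTop_of_tendsto_div (tendsto_logb_atTop one_lt_two) hprelog hkr
  refine tendsto_measure_toReal_one_of_tendsto_measure_compl <|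
    tendsto_of_tendsto_of_tendsto_of_le_of_le' tendsto_const_nhds
      ((tendsto_measure_lt_atTop hY).comp hgap) (.of_forall fun _ => zero_le) ?_
  filter_upwards [eventually_ge_atTop 1] with snr hsnr
  refine measure_mono_ae ?_
  filter_upwards [hH] with ω hω hout
  have hsum := sum_logb_one_add_mul_le (range k) one_lt_two hsnr fun i _ => hω i
  rw [card_range] at hsum
  have hlt : R snr < ∑ i ∈ range k, logb 2 (1 + snr * H i ω) := not_le.1 hout
  show R snr - k * logb 2 snr < Y ω
  linarith

/-- Lemma, Appendix D, case `k < r`: if the rate function has pre-log `r`, then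
for every positive integer `k < r`, `P[Σ_{i=1}^k log₂(1+SNR·Hᵢ) ≤ R(SNR)] → 1` as `SNR → ∞`. -/
theorem outage_prob_tendsto_one_of_k_lt_prelog
    {Ω : Type*} [MeasurableSpace Ω] (μ : Measure Ω) [IsProbabilityMeasure μ]
    (H : ℕ → Ω → ℝ) (hmeas : ∀ i, Measurable (H i))
    (hindep : iIndepFun H μ)
    (hdist : ∀ i, Measure.map (H i) μ = expMeasure 1)
    (r : ℝ) (hr : 0 < r) (R : ℝ → ℝ) (hRpos : ∀ snr > (0:ℝ), 0 < R snr)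
    (hprelog : Tendsto (fun snr => R snr / Real.logb 2 snr) atTop (𝓝 r))
    (k : ℕ) (hk : 1 ≤ k) (hkr : (k : ℝ) < r) :
    Tendsto
      (fun snr : ℝ =>
        (μ {ω | ∑ i ∈ Finset.range k, Real.logb 2 (1 + snr * H i ω) ≤ R snr}).toReal)
      atTop (𝓝 1) :=
  outage_prob_tendsto_one_of_k_lt_prelog_general μ H hmeas hdist r R hprelog k hkr
end

section
/- Fix an integer M ≥ 1 and a non-integer real r with 0 < r < M, and let R : (0,∞) → (0,∞) satisfy lim_{SNR→∞} R(SNR)/log₂(SNR) = r. Then the expected number of H-ARQ rounds converges to the ceiling of r: lim_{SNR→∞} E[X(R(SNR), SNR)] = ⌈r⌉; consequently, the long-term average rate R(SNR)/E[X(R(SNR), SNR)] has pre-log r/⌈r⌉, which is strictly smaller than 1. -/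
/-!
Fix a fading realization with all `Hᵢ > 0`. Each term `log₂(1 + SNR·Hᵢ)` grows like `log₂ SNR`,
so the `m`-th accumulated mutual information is `m·log₂ SNR + O(1)` while the rate is
`r·log₂ SNR + o(log₂ SNR)`. Since `r` is not an integer, for large `SNR` the first `⌈r⌉ - 1`
accumulated sums stay below the rate and the `⌈r⌉`-th exceeds it, so `X = ⌈r⌉ ≤ M`.
Exponential fading is almost surely positive and `X ≤ M`, so dominated convergence gives
`E[X] → ⌈r⌉`.
-/

open MeasureTheory ProbabilityTheory Real Filter Topology

/-- Number of IR H-ARQ rounds: `X(R, SNR) = min(M, min{m ≥ 1 : Σ_{i=1}^m log₂(1+SNR·Hᵢ) > R})`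
(realized as the infimum of `{M} ∪ {m ≥ 1 : accumulated mutual information exceeds R}`). -/
noncomputable def numRounds {Ω : Type*} (H : ℕ → Ω → ℝ) (M : ℕ) (snr R : ℝ) (ω : Ω) : ℕ :=
  sInf ({M} ∪ {m | 1 ≤ m ∧ R < ∑ i ∈ Finset.range m, Real.logb 2 (1 + snr * H i ω)})

lemma Filter.Tendsto.eventually_lt_of_div {α : Type*} {l : Filter α} {f g L : α → ℝ} {a b : ℝ}
    (hf : Tendsto (fun x => f x / L x) l (𝓝 a)) (hg : Tendsto (fun x => g x / L x) l (𝓝 b))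
    (hab : a < b) (hL : ∀ᶠ x in l, 0 < L x) : ∀ᶠ x in l, f x < g x := by
  filter_upwards [hf.eventually_lt hg hab, hL] with x hx hLx
  exact (div_lt_div_iff_of_pos_right hLx).mp hx

lemma tendsto_log_one_add_mul_div_log {h : ℝ} (hh : 0 < h) :
    Tendsto (fun s => log (1 + s * h) / log s) atTop (𝓝 1) := by
  have hsplit : ∀ᶠ s in atTop, log (1 + s * h) / log s = 1 + log (s⁻¹ + h) / log s := by
    filter_upwards [eventually_gt_atTop 1] with s hs
    have hs0 : 0 < s := one_pos.trans hs
    have hfactor : 1 + s * h = s * (s⁻¹ + h) := by field_simp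
    rw [hfactor, log_mul hs0.ne' (by positivity), add_div, div_self (log_pos hs).ne']
  have hrest : Tendsto (fun s => log (s⁻¹ + h) / log s) atTop (𝓝 0) := by
    have hinner : Tendsto (fun s : ℝ => s⁻¹ + h) atTop (𝓝 h) := by
      simpa using tendsto_inv_atTop_zero.add_const h
    exact ((continuousAt_log hh.ne').tendsto.comp hinner).div_atTop tendsto_log_atTop
  simpa using (tendsto_congr' hsplit).mpr (hrest.const_add 1)

lemma tendsto_sum_logb_one_add_mul_div_logb {b : ℝ} (hb : 1 < b) {h : ℕ → ℝ}
    (hh : ∀ i, 0 < h i) (m : ℕ) :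
    Tendsto (fun s => (∑ i ∈ Finset.range m, logb b (1 + s * h i)) / logb b s)
      atTop (𝓝 m) := by
  have hterms : ∀ s, (∑ i ∈ Finset.range m, logb b (1 + s * h i)) / logb b s =
      ∑ i ∈ Finset.range m, log (1 + s * h i) / log s := fun s => by
    rw [Finset.sum_div]
    exact Finset.sum_congr rfl fun i _ => div_div_div_cancel_right₀ (log_pos hb).ne' _ _
  simpa [hterms] using
    tendsto_finsetSum (Finset.range m) fun i _ => tendsto_log_one_add_mul_div_log (hh i)

lemma ae_pos_of_map_eq_expMeasure_s16 {Ω : Type*} [MeasurableSpace Ω] {μ : Measure Ω} {X : Ω → ℝ}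
    (hX : AEMeasurable X μ) {rate : ℝ} (hrate : 0 < rate) (hmap : μ.map X = expMeasure rate) :
    ∀ᵐ ω ∂μ, 0 < X ω := by
  have := isProbabilityMeasure_expMeasure hrate
  have hIic : expMeasure rate (Set.Iic 0) = 0 := by
    rw [← ofReal_cdf, cdf_expMeasure_eq hrate]
    simp
  refine ae_of_ae_map hX ?_
  rw [hmap, ae_iff]
  simp only [not_lt]
  exact hIic

lemma measurable_sInf_setOf_nat {Ω : Type*} [MeasurableSpace Ω] {p : Ω → ℕ → Prop}
    (hne : ∀ ω, ∃ n, p ω n) (hp : ∀ n, MeasurableSet {ω | p ω n}) :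
    Measurable fun ω => sInf {n | p ω n} := by
  classical
  convert measurable_find hne hp using 2 with ω
  exact Nat.sInf_def (hne ω)

lemma lt_natCeil_of_forall_ne_intCast {r : ℝ} (h : ∀ n : ℤ, r ≠ n) : r < ⌈r⌉₊ :=
  (Nat.le_ceil r).lt_of_ne (by exact_mod_cast h ⌈r⌉₊)

namespace numRounds

variable {Ω : Type*} (H : ℕ → Ω → ℝ) (M : ℕ) (snr R : ℝ) (ω : Ω)

lemma le : numRounds H M snr R ω ≤ M :=
  Nat.sInf_le (Or.inl rfl)

lemma eq_of_sum_le_of_lt_sum {k : ℕ} (hk : 1 ≤ k) (hkM : k ≤ M)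
    (hbelow : ∀ m < k, ∑ i ∈ Finset.range m, logb 2 (1 + snr * H i ω) ≤ R)
    (habove : R < ∑ i ∈ Finset.range k, logb 2 (1 + snr * H i ω)) :
    numRounds H M snr R ω = k := by
  refine le_antisymm (Nat.sInf_le (Or.inr ⟨hk, habove⟩)) (le_csInf ⟨M, Or.inl rfl⟩ ?_)
  rintro m (rfl | ⟨-, hm⟩)
  · exact hkM
  · by_contra! hmk
    exact (hm.trans_le (hbelow m hmk)).false

variable {H}

lemma measurable [MeasurableSpace Ω] (hH : ∀ i, Measurable (H i)) :
    Measurable (numRounds H M snr R) := by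
  have hsum (m : ℕ) : Measurable fun ω => ∑ i ∈ Finset.range m, logb 2 (1 + snr * H i ω) :=
    Finset.measurable_sum _ fun i _ => (((hH i).const_mul snr).const_add 1).log.div_const _
  refine measurable_sInf_setOf_nat (fun _ => ⟨M, Or.inl rfl⟩) fun m => ?_
  exact (measurableSet_eq_fun measurable_const measurable_const).union
    ((MeasurableSet.const _).inter (measurableSet_lt measurable_const (hsum m)))

end numRounds

lemma numRounds.eventually_eq_natCeil {Ω : Type*} {H : ℕ → Ω → ℝ} {M : ℕ} {ω : Ω}
    (hω : ∀ i, 0 < H i ω) {r : ℝ} (hr : 0 < r) (hrM : r < M) (hnonint : ∀ n : ℤ, r ≠ n)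
    {R : ℝ → ℝ} (hprelog : Tendsto (fun snr => R snr / logb 2 snr) atTop (𝓝 r)) :
    ∀ᶠ snr in atTop, numRounds H M snr (R snr) ω = ⌈r⌉₊ := by
  have hsum := tendsto_sum_logb_one_add_mul_div_logb one_lt_two hω
  have hlog : ∀ᶠ snr in atTop, 0 < logb 2 snr :=
    (eventually_gt_atTop 1).mono fun _ => logb_pos one_lt_two
  have habove :=
    hprelog.eventually_lt_of_div (hsum ⌈r⌉₊) (lt_natCeil_of_forall_ne_intCast hnonint) hlog
  have hbelow : ∀ᶠ snr in atTop, ∀ m ∈ Finset.range ⌈r⌉₊,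
      ∑ i ∈ Finset.range m, logb 2 (1 + snr * H i ω) ≤ R snr := by
    refine (eventually_all_finset _).2 fun m hm => ?_
    have hmr : (m : ℝ) < r := by
      have := Nat.ceil_lt_add_one hr.le
      have : (m : ℝ) + 1 ≤ ⌈r⌉₊ := by exact_mod_cast Finset.mem_range.1 hm
      linarith
    exact ((hsum m).eventually_lt_of_div hprelog hmr hlog).mono fun _ => le_of_lt
  filter_upwards [habove, hbelow] with snr habove hbelow
  exact numRounds.eq_of_sum_le_of_lt_sum H M snr (R snr) ω (Nat.one_le_ceil_iff.2 hr)
    (Nat.ceil_le.2 hrM.le) (fun m hm => hbelow m (Finset.mem_range.2 hm)) habove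

lemma numRounds.tendsto_integral {Ω : Type*} [MeasurableSpace Ω] {μ : Measure Ω}
    [IsProbabilityMeasure μ] {H : ℕ → Ω → ℝ} (hH : ∀ i, Measurable (H i)) {M : ℕ}
    {R : ℝ → ℝ} {k : ℕ} (hk : ∀ᵐ ω ∂μ, ∀ᶠ snr in atTop, numRounds H M snr (R snr) ω = k) :
    Tendsto (fun snr => ∫ ω, (numRounds H M snr (R snr) ω : ℝ) ∂μ) atTop (𝓝 k) := by
  have hlim := tendsto_integral_filter_of_dominated_convergence (μ := μ) (fun _ => (M : ℝ))
    (F := fun snr ω => (numRounds H M snr (R snr) ω : ℝ)) (f := fun _ => (k : ℝ))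
    (.of_forall fun snr =>
      (measurable_from_top.comp (numRounds.measurable M snr (R snr) hH)).aestronglyMeasurable)
    (.of_forall fun snr => .of_forall fun ω => by
      simpa using Nat.cast_le (α := ℝ).2 (numRounds.le H M snr (R snr) ω))
    (integrable_const _)
    (hk.mono fun ω hω => tendsto_const_nhds.congr' (hω.mono fun _ h => by simp only [h]))
  simpa using hlim

theorem expected_rounds_tendsto_ceil_of_noninteger_prelog_general
    {Ω : Type*} [MeasurableSpace Ω] (μ : Measure Ω) [IsProbabilityMeasure μ]
    (H : ℕ → Ω → ℝ) (hmeas : ∀ i, Measurable (H i))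
    (hdist : ∀ i, Measure.map (H i) μ = expMeasure 1)
    (M : ℕ) (r : ℝ) (hr : 0 < r) (hrM : r < (M : ℝ))
    (hnonint : ∀ n : ℤ, r ≠ (n : ℝ))
    (R : ℝ → ℝ)
    (hprelog : Tendsto (fun snr => R snr / Real.logb 2 snr) atTop (𝓝 r)) :
    Tendsto
      (fun snr : ℝ => ∫ ω, (numRounds H M snr (R snr) ω : ℝ) ∂μ)
      atTop (𝓝 ((⌈r⌉ : ℝ))) ∧
    Tendsto
      (fun snr : ℝ =>
        (R snr / ∫ ω, (numRounds H M snr (R snr) ω : ℝ) ∂μ) / Real.logb 2 snr)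
      atTop (𝓝 (r / (⌈r⌉ : ℝ))) ∧
    r / (⌈r⌉ : ℝ) < 1 := by
  have hpos : ∀ᵐ ω ∂μ, ∀ i, 0 < H i ω :=
    ae_all_iff.2 fun i => ae_pos_of_map_eq_expMeasure_s16 (hmeas i).aemeasurable one_pos (hdist i)
  have hE := numRounds.tendsto_integral hmeas
    (hpos.mono fun _ hω => numRounds.eventually_eq_natCeil hω hr hrM hnonint hprelog)
  have hceil_pos : (0 : ℝ) < ⌈r⌉₊ := by exact_mod_cast Nat.ceil_pos.2 hr
  rw [← natCast_ceil_eq_intCast_ceil hr.le]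
  exact ⟨hE, (hprelog.div hE hceil_pos.ne').congr fun _ => div_right_comm _ _ _,
    (div_lt_one hceil_pos).2 (lt_natCeil_of_forall_ne_intCast hnonint)⟩

/-- if the initial rate has non-integer pre-log `r` with `0 < r < M`, then
`E[X(R(SNR), SNR)] → ⌈r⌉` as `SNR → ∞`; consequently the long-term average rate
`R(SNR)/E[X(R(SNR), SNR)]` has pre-log `r/⌈r⌉ < 1`. -/
theorem expected_rounds_tendsto_ceil_of_noninteger_prelog
    {Ω : Type*} [MeasurableSpace Ω] (μ : Measure Ω) [IsProbabilityMeasure μ]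
    (H : ℕ → Ω → ℝ) (hmeas : ∀ i, Measurable (H i))
    (hindep : iIndepFun H μ)
    (hdist : ∀ i, Measure.map (H i) μ = expMeasure 1)
    (M : ℕ) (hM : 1 ≤ M) (r : ℝ) (hr : 0 < r) (hrM : r < (M : ℝ))
    (hnonint : ∀ n : ℤ, r ≠ (n : ℝ))
    (R : ℝ → ℝ) (hRpos : ∀ snr > (0:ℝ), 0 < R snr)
    (hprelog : Tendsto (fun snr => R snr / Real.logb 2 snr) atTop (𝓝 r)) :
    Tendsto
      (fun snr : ℝ => ∫ ω, (numRounds H M snr (R snr) ω : ℝ) ∂μ)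
      atTop (𝓝 ((⌈r⌉ : ℝ))) ∧
    Tendsto
      (fun snr : ℝ =>
        (R snr / ∫ ω, (numRounds H M snr (R snr) ω : ℝ) ∂μ) / Real.logb 2 snr)
      atTop (𝓝 (r / (⌈r⌉ : ℝ))) ∧
    r / (⌈r⌉ : ℝ) < 1 :=
  expected_rounds_tendsto_ceil_of_noninteger_prelog_general μ H hmeas hdist M r hr hrM hnonint R
    hprelog
end
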